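/- Let a > 1, 0 < r < 1 and c_A, c_R ≥ 1 be real numbers, and let f : (0,∞) → (0,∞) be strictly increasing with G(x, f(x)) = 0 for all x > 0. If ā₂ > 0 and ā₃ > 0, then f(x) > ((a − 1)/(1 − r))·x for all x > 0 (the partial-cooperativity threshold lies strictly above the non-cooperative linear threshold, so the activation range increases). If ā₂ < 0 and ā₃ < 0, then f(x) < ((a − 1)/(1 − r))·x for all x > 0 (the activation range decreases). -/
import Mathlib

set_option maxHeartbeats 1000000


/-- The threshold function `G` for the BEWARE operator with 3 binding sites under
partial cooperativity. -/
def G (a r cA cR x y : ℝ) : ℝ :=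
  (1 + cA * a * x + cR * r * y) ^ 3 - (1 + cA * x + cR * y) ^ 3
    + (cR - 1) * ((1 + cA * a * x) ^ 3 - (1 + cA * x) ^ 3)
    + (cA - 1) * ((1 + cR * r * y) ^ 3 - (1 + cR * y) ^ 3)

/-- Coefficient `ā₂`. -/
noncomputable def abar2 (a r cA cR : ℝ) : ℝ :=
  3 * cA * cR * ((1 - r) / (a - 1))
    * ((a * r - 1) * (2 - cA - cR) + (cA - cR) * (a - r))

/-- Coefficient `ā₃`. -/
noncomputable def abar3 (a r cA cR : ℝ) : ℝ :=
  cA * cR * ((1 - r) / (a - 1) ^ 2)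
    * ((1 + a + a ^ 2) * (1 - r) ^ 2 * cA ^ 2
      + 3 * cA * (1 - r) * (a ^ 2 * r - 1)
      - 3 * cR * (a - 1) * (1 - a * r ^ 2)
      - (1 + r + r ^ 2) * (a - 1) ^ 2 * cR ^ 2)

/- ### Auxiliary lemmas -/

/-- Log-submodularity style inequality for `F(p,q) = p² + pq + q²`:
increments `(u, u+s)` (shallow) and `(d+t, d)` (steep) anti-correlate. -/
lemma keyF (m n u d s t : ℝ) (hm : 0 ≤ m) (hn : 0 ≤ n) (hu : 0 ≤ u)
    (hd : 0 ≤ d) (hs : 0 ≤ s) (ht : 0 ≤ t) :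
    (m^2 + m*n + n^2) * ((m+d+t+u)^2 + (m+d+t+u)*(n+d+u+s) + (n+d+u+s)^2)
      ≤ ((m+u)^2 + (m+u)*(n+u+s) + (n+u+s)^2)
        * ((m+d+t)^2 + (m+d+t)*(n+d) + (n+d)^2) := by
  have hdiff : ((m+u)^2 + (m+u)*(n+u+s) + (n+u+s)^2)
        * ((m+d+t)^2 + (m+d+t)*(n+d) + (n+d)^2)
      - (m^2 + m*n + n^2) * ((m+d+t+u)^2 + (m+d+t+u)*(n+d+u+s) + (n+d+u+s)^2)
      = s^2*t^2 + 3*d*s^2*t + 3*d^2*s^2 + 3*u*s*t^2 + 9*u*d*s*t + 9*u*d^2*s + 3*u^2*t^2 + 9*u^2*d*t + 9*u^2*d^2 + 2*n*s*t^2 + n*s^2*t + 6*n*d*s*t + 3*n*d*s^2 + 6*n*d^2*s + 3*n*u*t^2 + 3*n*u*s*t + 9*n*u*d*t + 9*n*u*d*s + 9*n*u*d^2 + 3*n*u^2*t + 9*n*u^2*d + n^2*s*t + 3*n^2*d*s + 3*n^2*u*d + m*s*t^2 + 2*m*s^2*t + 3*m*d*s*t + 3*m*d*s^2 + 3*m*d^2*s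 + 3*m*u*t^2 + 6*m*u*s*t + 9*m*u*d*t + 9*m*u*d*s + 9*m*u*d^2 + 6*m*u^2*t + 9*m*u^2*d + 4*m*n*s*t + 6*m*n*d*s + 6*m*n*u*t + 12*m*n*u*d + m^2*s*t + 3*m^2*u*t + 3*m^2*u*d := by ring
  have g0 : (0:ℝ) ≤ s^2*t^2 := (mul_nonneg (pow_nonneg hs 2) (pow_nonneg ht 2))
  have g1 : (0:ℝ) ≤ d*s^2*t := (mul_nonneg (mul_nonneg hd (pow_nonneg hs 2)) ht)
  have g2 : (0:ℝ) ≤ d^2*s^2 := (mul_nonneg (pow_nonneg hd 2) (pow_nonneg hs 2))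
  have g3 : (0:ℝ) ≤ u*s*t^2 := (mul_nonneg (mul_nonneg hu hs) (pow_nonneg ht 2))
  have g4 : (0:ℝ) ≤ u*d*s*t := (mul_nonneg (mul_nonneg (mul_nonneg hu hd) hs) ht)
  have g5 : (0:ℝ) ≤ u*d^2*s := (mul_nonneg (mul_nonneg hu (pow_nonneg hd 2)) hs)
  have g6 : (0:ℝ) ≤ u^2*t^2 := (mul_nonneg (pow_nonneg hu 2) (pow_nonneg ht 2))
  have g7 : (0:ℝ) ≤ u^2*d*t := (mul_nonneg (mul_nonneg (pow_nonneg hu 2) hd) ht)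
  have g8 : (0:ℝ) ≤ u^2*d^2 := (mul_nonneg (pow_nonneg hu 2) (pow_nonneg hd 2))
  have g9 : (0:ℝ) ≤ n*s*t^2 := (mul_nonneg (mul_nonneg hn hs) (pow_nonneg ht 2))
  have g10 : (0:ℝ) ≤ n*s^2*t := (mul_nonneg (mul_nonneg hn (pow_nonneg hs 2)) ht)
  have g11 : (0:ℝ) ≤ n*d*s*t := (mul_nonneg (mul_nonneg (mul_nonneg hn hd) hs) ht)
  have g12 : (0:ℝ) ≤ n*d*s^2 := (mul_nonneg (mul_nonneg hn hd) (pow_nonneg hs 2))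
  have g13 : (0:ℝ) ≤ n*d^2*s := (mul_nonneg (mul_nonneg hn (pow_nonneg hd 2)) hs)
  have g14 : (0:ℝ) ≤ n*u*t^2 := (mul_nonneg (mul_nonneg hn hu) (pow_nonneg ht 2))
  have g15 : (0:ℝ) ≤ n*u*s*t := (mul_nonneg (mul_nonneg (mul_nonneg hn hu) hs) ht)
  have g16 : (0:ℝ) ≤ n*u*d*t := (mul_nonneg (mul_nonneg (mul_nonneg hn hu) hd) ht)
  have g17 : (0:ℝ) ≤ n*u*d*s := (mul_nonneg (mul_nonneg (mul_nonneg hn hu) hd) hs)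
  have g18 : (0:ℝ) ≤ n*u*d^2 := (mul_nonneg (mul_nonneg hn hu) (pow_nonneg hd 2))
  have g19 : (0:ℝ) ≤ n*u^2*t := (mul_nonneg (mul_nonneg hn (pow_nonneg hu 2)) ht)
  have g20 : (0:ℝ) ≤ n*u^2*d := (mul_nonneg (mul_nonneg hn (pow_nonneg hu 2)) hd)
  have g21 : (0:ℝ) ≤ n^2*s*t := (mul_nonneg (mul_nonneg (pow_nonneg hn 2) hs) ht)
  have g22 : (0:ℝ) ≤ n^2*d*s := (mul_nonneg (mul_nonneg (pow_nonneg hn 2) hd) hs)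
  have g23 : (0:ℝ) ≤ n^2*u*d := (mul_nonneg (mul_nonneg (pow_nonneg hn 2) hu) hd)
  have g24 : (0:ℝ) ≤ m*s*t^2 := (mul_nonneg (mul_nonneg hm hs) (pow_nonneg ht 2))
  have g25 : (0:ℝ) ≤ m*s^2*t := (mul_nonneg (mul_nonneg hm (pow_nonneg hs 2)) ht)
  have g26 : (0:ℝ) ≤ m*d*s*t := (mul_nonneg (mul_nonneg (mul_nonneg hm hd) hs) ht)
  have g27 : (0:ℝ) ≤ m*d*s^2 := (mul_nonneg (mul_nonneg hm hd) (pow_nonneg hs 2))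
  have g28 : (0:ℝ) ≤ m*d^2*s := (mul_nonneg (mul_nonneg hm (pow_nonneg hd 2)) hs)
  have g29 : (0:ℝ) ≤ m*u*t^2 := (mul_nonneg (mul_nonneg hm hu) (pow_nonneg ht 2))
  have g30 : (0:ℝ) ≤ m*u*s*t := (mul_nonneg (mul_nonneg (mul_nonneg hm hu) hs) ht)
  have g31 : (0:ℝ) ≤ m*u*d*t := (mul_nonneg (mul_nonneg (mul_nonneg hm hu) hd) ht)
  have g32 : (0:ℝ) ≤ m*u*d*s := (mul_nonneg (mul_nonneg (mul_nonneg hm hu) hd) hs)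
  have g33 : (0:ℝ) ≤ m*u*d^2 := (mul_nonneg (mul_nonneg hm hu) (pow_nonneg hd 2))
  have g34 : (0:ℝ) ≤ m*u^2*t := (mul_nonneg (mul_nonneg hm (pow_nonneg hu 2)) ht)
  have g35 : (0:ℝ) ≤ m*u^2*d := (mul_nonneg (mul_nonneg hm (pow_nonneg hu 2)) hd)
  have g36 : (0:ℝ) ≤ m*n*s*t := (mul_nonneg (mul_nonneg (mul_nonneg hm hn) hs) ht)
  have g37 : (0:ℝ) ≤ m*n*d*s := (mul_nonneg (mul_nonneg (mul_nonneg hm hn) hd) hs)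
  have g38 : (0:ℝ) ≤ m*n*u*t := (mul_nonneg (mul_nonneg (mul_nonneg hm hn) hu) ht)
  have g39 : (0:ℝ) ≤ m*n*u*d := (mul_nonneg (mul_nonneg (mul_nonneg hm hn) hu) hd)
  have g40 : (0:ℝ) ≤ m^2*s*t := (mul_nonneg (mul_nonneg (pow_nonneg hm 2) hs) ht)
  have g41 : (0:ℝ) ≤ m^2*u*t := (mul_nonneg (mul_nonneg (pow_nonneg hm 2) hu) ht)
  have g42 : (0:ℝ) ≤ m^2*u*d := (mul_nonneg (mul_nonneg (pow_nonneg hm 2) hu) hd)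
  linarith

/-- Monotonicity of `p² + pq + q²`. -/
lemma Smono (p q P Q : ℝ) (hp : 0 ≤ p) (hq : 0 ≤ q) (hpP : p ≤ P) (hqQ : q ≤ Q) :
    p^2 + p*q + q^2 ≤ P^2 + P*Q + Q^2 := by nlinarith

/-- Positivity of `p² + pq + q²`. -/
lemma Spos (p q : ℝ) (hp : 0 < p) (hq : 0 < q) : 0 < p^2 + p*q + q^2 := by nlinarith

/-- Abstract form of the crossing inequality for the bridge lemma. -/
lemma delta (B1 B2 Sa Sb Ta Tb C e d : ℝ) (hB1 : 0 < B1) (hB : B1 < B2)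
    (hSa : 0 < Sa) (hS : Sa ≤ Sb) (hTa : 0 < Ta) (hT : Ta ≤ Tb)
    (hC : 0 ≤ C) (he : 0 ≤ e) (hd : 0 ≤ d) (hkey : Ta * Sb ≤ Tb * Sa) :
    B1 * (Sa + d * Ta) * (Sb + e * C) < B2 * (Sb + d * Tb) * (Sa + e * C) := by
  have hSb : 0 < Sb := lt_of_lt_of_le hSa hS
  have hB2 : 0 < B2 := lt_trans hB1 hB
  have t1 : 0 < (B2 - B1) * (Sa * Sb) :=
    mul_pos (by linarith) (mul_pos hSa hSb)
  have t2 : 0 ≤ e * C * (B2 * Sb - B1 * Sa) := by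
    have : B1 * Sa ≤ B2 * Sb := by nlinarith
    exact mul_nonneg (mul_nonneg he hC) (by linarith)
  have h5 : 0 ≤ (B2 - B1) * (Ta * Sb) :=
    mul_nonneg (by linarith) (mul_nonneg hTa.le hSb.le)
  have h6 : 0 ≤ B2 * (Tb * Sa - Ta * Sb) := mul_nonneg hB2.le (by linarith)
  have t3 : 0 ≤ d * (B2 * (Tb * Sa) - B1 * (Ta * Sb)) := by
    apply mul_nonneg hd
    nlinarith
  have t4 : 0 ≤ d * e * C * (B2 * Tb - B1 * Ta) := by
    have : B1 * Ta ≤ B2 * Tb := by nlinarith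
    exact mul_nonneg (mul_nonneg (mul_nonneg hd he) hC) (by linarith)
  nlinarith [t1, t2, t3, t4]

/-- Structural decomposition of `G`. -/
lemma Gdecomp (a r cA cR x y : ℝ) :
    G a r cA cR x y
      = (a - 1) * (cA * x)
          * (((1 + cA*a*x + cR*r*y)^2 + (1 + cA*a*x + cR*r*y)*(1 + cA*x + cR*y)
                + (1 + cA*x + cR*y)^2)
             + (cR - 1) * ((1 + cA*a*x)^2 + (1 + cA*a*x)*(1 + cA*x) + (1 + cA*x)^2))
        - (1 - r) * (cR * y)
          * (((1 + cA*a*x + cR*r*y)^2 + (1 + cA*a*x + cR*r*y)*(1 + cA*x + cR*y)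
                + (1 + cA*x + cR*y)^2)
             + (cA - 1) * ((1 + cR*r*y)^2 + (1 + cR*r*y)*(1 + cR*y) + (1 + cR*y)^2)) := by
  unfold G; ring

/-- The bridge lemma: once `G x ·` is nonpositive it stays negative. -/
lemma bridge (a r cA cR x y1 y2 : ℝ) (ha : 1 < a) (hr0 : 0 < r) (hr1 : r < 1)
    (hcA : 1 ≤ cA) (hcR : 1 ≤ cR) (hx : 0 < x) (hy1 : 0 < y1) (h12 : y1 < y2)
    (h1 : G a r cA cR x y1 ≤ 0) : G a r cA cR x y2 < 0 := by
  have ha0 : (0:ℝ) < a := by linarith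
  have hcA0 : (0:ℝ) < cA := by linarith
  have hcR0 : (0:ℝ) < cR := by linarith
  have hy2 : 0 < y2 := lt_trans hy1 h12
  have hAx : 0 < cA * x := mul_pos hcA0 hx
  have hB1 : 0 < cR * y1 := mul_pos hcR0 hy1
  have hB2 : 0 < cR * y2 := mul_pos hcR0 hy2
  have haAx : 0 < cA * a * x := mul_pos (mul_pos hcA0 ha0) hx
  have hrB1 : 0 < cR * r * y1 := mul_pos (mul_pos hcR0 hr0) hy1
  have hrB2 : 0 < cR * r * y2 := mul_pos (mul_pos hcR0 hr0) hy2
  have hBB : cR * y1 < cR * y2 := by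
    have := mul_pos hcR0 (sub_pos.mpr h12); linarith [this]
  have hyr : cR * r * y1 ≤ cR * r * y2 := by
    have := mul_nonneg (mul_pos hcR0 hr0).le (sub_pos.mpr h12).le; linarith [this]
  -- opaque names for the structural subexpressions
  obtain ⟨P1, hP1def⟩ : ∃ p, p = 1 + cA*a*x + cR*r*y1 := ⟨_, rfl⟩
  obtain ⟨Q1, hQ1def⟩ : ∃ p, p = 1 + cA*x + cR*y1 := ⟨_, rfl⟩
  obtain ⟨P2, hP2def⟩ : ∃ p, p = 1 + cA*a*x + cR*r*y2 := ⟨_, rfl⟩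
  obtain ⟨Q2, hQ2def⟩ : ∃ p, p = 1 + cA*x + cR*y2 := ⟨_, rfl⟩
  obtain ⟨M1, hM1def⟩ : ∃ p, p = 1 + cR*r*y1 := ⟨_, rfl⟩
  obtain ⟨N1, hN1def⟩ : ∃ p, p = 1 + cR*y1 := ⟨_, rfl⟩
  obtain ⟨M2, hM2def⟩ : ∃ p, p = 1 + cR*r*y2 := ⟨_, rfl⟩
  obtain ⟨N2, hN2def⟩ : ∃ p, p = 1 + cR*y2 := ⟨_, rfl⟩
  have hP1 : 0 < P1 := by rw [hP1def]; linarith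
  have hQ1 : 0 < Q1 := by rw [hQ1def]; linarith
  have hP2 : 0 < P2 := by rw [hP2def]; linarith
  have hQ2 : 0 < Q2 := by rw [hQ2def]; linarith
  have hM1 : 0 < M1 := by rw [hM1def]; linarith
  have hN1 : 0 < N1 := by rw [hN1def]; linarith
  have hE : (0:ℝ) < 1 + cA*a*x := by linarith
  have hF : (0:ℝ) < 1 + cA*x := by linarith
  have hP12 : P1 ≤ P2 := by rw [hP1def, hP2def]; linarith
  have hQ12 : Q1 ≤ Q2 := by rw [hQ1def, hQ2def]; linarith
  have hM12 : M1 ≤ M2 := by rw [hM1def, hM2def]; linarith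
  have hN12 : N1 ≤ N2 := by rw [hN1def, hN2def]; linarith
  obtain ⟨Sa, hSadef⟩ : ∃ p, p = P1^2 + P1*Q1 + Q1^2 := ⟨_, rfl⟩
  obtain ⟨Sb, hSbdef⟩ : ∃ p, p = P2^2 + P2*Q2 + Q2^2 := ⟨_, rfl⟩
  obtain ⟨Ta, hTadef⟩ : ∃ p, p = M1^2 + M1*N1 + N1^2 := ⟨_, rfl⟩
  obtain ⟨Tb, hTbdef⟩ : ∃ p, p = M2^2 + M2*N2 + N2^2 := ⟨_, rfl⟩
  obtain ⟨C, hCdef⟩ : ∃ p,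
      p = (1 + cA*a*x)^2 + (1 + cA*a*x)*(1 + cA*x) + (1 + cA*x)^2 := ⟨_, rfl⟩
  have hSa : 0 < Sa := by rw [hSadef]; exact Spos _ _ hP1 hQ1
  have hSb : 0 < Sb := by rw [hSbdef]; exact Spos _ _ hP2 hQ2
  have hTa : 0 < Ta := by rw [hTadef]; exact Spos _ _ hM1 hN1
  have hS : Sa ≤ Sb := by
    rw [hSadef, hSbdef]; exact Smono _ _ _ _ hP1.le hQ1.le hP12 hQ12
  have hT : Ta ≤ Tb := by
    rw [hTadef, hTbdef]; exact Smono _ _ _ _ hM1.le hN1.le hM12 hN12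
  have hC : 0 < C := by rw [hCdef]; exact Spos _ _ hE hF
  -- key inequality via keyF
  have hkey : Ta * Sb ≤ Tb * Sa := by
    have hu0 : 0 ≤ cR*r*(y2-y1) :=
      mul_nonneg (mul_nonneg hcR0.le hr0.le) (by linarith)
    have hs0 : 0 ≤ cR*(1-r)*(y2-y1) :=
      mul_nonneg (mul_nonneg hcR0.le (by linarith)) (by linarith)
    have ht0 : 0 ≤ cA*x*(a-1) := mul_nonneg hAx.le (by linarith)
    have hM10 : 0 ≤ M1 := hM1.le
    have hN10 : 0 ≤ N1 := hN1.le
    have hkf := keyF M1 N1 (cR*r*(y2-y1)) (cA*x) (cR*(1-r)*(y2-y1)) (cA*x*(a-1))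
      hM10 hN10 hu0 hAx.le hs0 ht0
    have e1 : M1 + cR*r*(y2-y1) = M2 := by rw [hM1def, hM2def]; ring
    have e2 : N1 + cR*r*(y2-y1) + cR*(1-r)*(y2-y1) = N2 := by
      rw [hN1def, hN2def]; ring
    have e3 : M1 + cA*x + cA*x*(a-1) = P1 := by rw [hM1def, hP1def]; ring
    have e4 : N1 + cA*x = Q1 := by rw [hN1def, hQ1def]; ring
    have e5 : M1 + cA*x + cA*x*(a-1) + cR*r*(y2-y1) = P2 := by
      rw [hM1def, hP2def]; ring
    have e6 : N1 + cA*x + cR*r*(y2-y1) + cR*(1-r)*(y2-y1) = Q2 := by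
      rw [hN1def, hQ2def]; ring
    rw [e5, e6, e1, e2, e3, e4] at hkf
    rw [hTadef, hTbdef, hSadef, hSbdef]
    linarith [hkf]
  -- crossing inequality
  have hDelta : (cR*y1) * (Sa + (cA-1)*Ta) * (Sb + (cR-1)*C)
      < (cR*y2) * (Sb + (cA-1)*Tb) * (Sa + (cR-1)*C) :=
    delta (cR*y1) (cR*y2) Sa Sb Ta Tb C (cR-1) (cA-1) hB1 hBB hSa hS hTa hT
      hC.le (by linarith) (by linarith) hkey
  have hRC : 0 ≤ (cR-1)*C := mul_nonneg (by linarith) hC.le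
  have hU1 : 0 < Sa + (cR-1)*C := by linarith
  have hU2 : 0 < Sb + (cR-1)*C := by linarith
  -- rewrite hypotheses via decomposition
  have hd1 := Gdecomp a r cA cR x y1
  have hd2 := Gdecomp a r cA cR x y2
  rw [← hP1def, ← hQ1def, ← hM1def, ← hN1def, ← hSadef, ← hTadef, ← hCdef] at hd1
  rw [← hP2def, ← hQ2def, ← hM2def, ← hN2def, ← hSbdef, ← hTbdef, ← hCdef] at hd2
  rw [hd1] at h1
  rw [hd2]
  have h1' : (a-1)*(cA*x)*(Sa + (cR-1)*C) ≤ (1-r)*(cR*y1)*(Sa + (cA-1)*Ta) := by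
    linarith
  have step1 : (a-1)*(cA*x)*(Sa + (cR-1)*C)*(Sb + (cR-1)*C)
      ≤ (1-r)*(cR*y1)*(Sa + (cA-1)*Ta)*(Sb + (cR-1)*C) :=
    mul_le_mul_of_nonneg_right h1' hU2.le
  have hDelta' : (1-r)*((cR*y1) * (Sa + (cA-1)*Ta) * (Sb + (cR-1)*C))
      < (1-r)*((cR*y2) * (Sb + (cA-1)*Tb) * (Sa + (cR-1)*C)) := by
    apply mul_lt_mul_of_pos_left hDelta
    linarith
  have step2 : ((a-1)*(cA*x)*(Sb + (cR-1)*C)) * (Sa + (cR-1)*C)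
      < ((1-r)*(cR*y2)*(Sb + (cA-1)*Tb)) * (Sa + (cR-1)*C) := by
    linarith [step1, hDelta']
  have step3 : (a-1)*(cA*x)*(Sb + (cR-1)*C) < (1-r)*(cR*y2)*(Sb + (cA-1)*Tb) :=
    lt_of_mul_lt_mul_right step2 hU1.le
  linarith

/-- Value of `G` on the non-cooperative threshold line. -/
lemma Gline (a r cA cR x : ℝ) (ha : 1 < a) (hr1 : r < 1) :
    G a r cA cR x ((a-1)/(1-r)*x)
      = abar2 a r cA cR * ((a-1)/(1-r)*x)^2 + abar3 a r cA cR * ((a-1)/(1-r)*x)^3 := by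
  have h1 : a - 1 ≠ 0 := sub_ne_zero.mpr (by linarith)
  have h2 : (1:ℝ) - r ≠ 0 := sub_ne_zero.mpr (by linarith)
  unfold G abar2 abar3
  field_simp
  ring

/-- If `ā₂ > 0` and `ā₃ > 0` the partial-cooperativity threshold lies strictly
above the non-cooperative linear threshold; if `ā₂ < 0` and `ā₃ < 0` it lies
strictly below. -/
theorem threshold_above_or_below (a r cA cR : ℝ) (f : ℝ → ℝ)
    (ha : 1 < a) (hr0 : 0 < r) (hr1 : r < 1) (hcA : 1 ≤ cA) (hcR : 1 ≤ cR)
    (hfpos : ∀ x, 0 < x → 0 < f x)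
    (hfmono : StrictMonoOn f (Set.Ioi 0))
    (hfroot : ∀ x, 0 < x → G a r cA cR x (f x) = 0) :
    (0 < abar2 a r cA cR → 0 < abar3 a r cA cR →
      ∀ x, 0 < x → (a - 1) / (1 - r) * x < f x) ∧
    (abar2 a r cA cR < 0 → abar3 a r cA cR < 0 →
      ∀ x, 0 < x → f x < (a - 1) / (1 - r) * x) := by
  have hk : 0 < (a - 1) / (1 - r) := div_pos (by linarith) (by linarith)
  constructor
  · intro h2 h3 x hx
    have hy0 : 0 < (a - 1) / (1 - r) * x := mul_pos hk hx
    have hGpos : 0 < G a r cA cR x ((a - 1) / (1 - r) * x) := by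
      rw [Gline a r cA cR x ha hr1]
      have p2 := mul_pos h2 (pow_pos hy0 2)
      have p3 := mul_pos h3 (pow_pos hy0 3)
      linarith
    rcases lt_trichotomy (f x) ((a - 1) / (1 - r) * x) with hlt | heq | hgt
    · exfalso
      have hb := bridge a r cA cR x (f x) ((a - 1) / (1 - r) * x) ha hr0 hr1 hcA hcR
        hx (hfpos x hx) hlt (le_of_eq (hfroot x hx))
      linarith
    · exfalso
      rw [← heq] at hGpos
      rw [hfroot x hx] at hGpos
      exact lt_irrefl 0 hGpos
    · exact hgt
  · intro h2 h3 x hx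
    have hy0 : 0 < (a - 1) / (1 - r) * x := mul_pos hk hx
    have hGneg : G a r cA cR x ((a - 1) / (1 - r) * x) < 0 := by
      rw [Gline a r cA cR x ha hr1]
      have p2 := mul_neg_of_neg_of_pos h2 (pow_pos hy0 2)
      have p3 := mul_neg_of_neg_of_pos h3 (pow_pos hy0 3)
      linarith
    rcases lt_trichotomy (f x) ((a - 1) / (1 - r) * x) with hlt | heq | hgt
    · exact hlt
    · exfalso
      rw [← heq] at hGneg
      rw [hfroot x hx] at hGneg
      exact lt_irrefl 0 hGneg
    · exfalso
      have hb := bridge a r cA cR x ((a - 1) / (1 - r) * x) (f x) ha hr0 hr1 hcA hcR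
        hx hy0 hgt hGneg.le
      rw [hfroot x hx] at hb
      exact lt_irrefl 0 hb
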